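/- Let b ∈ B_Γ be supermodular on ℝ^k (i.e., b(x ∨ y) + b(x ∧ y) ≥ b(x) + b(y) for all x,y, where ∨ and ∧ are the coordinatewise maximum and minimum). Then for every x ∈ ℝ_+^k the subdifferential ∂b(x) has a coordinatewise-greatest element q*(x), this element belongs to Γ, and the map x ↦ q*(x) is monotone: q*(y) ≥ q*(x) coordinatewise whenever y ≥ x coordinatewise in ℝ_+^k. -/

import Mathlib

open MeasureTheory Filter

noncomputable section

abbrev E (k : ℕ) := EuclideanSpace ℝ (Fin k)

def orthant (k : ℕ) : Set (E k) := {x | ∀ i, 0 ≤ x i}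

/-- The dot product `g · x` on `ℝ^k`. -/
def dotp {k : ℕ} (g x : E k) : ℝ := ∑ i, g i * x i

def IsAlloc {k : ℕ} (Γ : Set (E k)) (q : E k → E k) : Prop :=
  ∀ x ∈ orthant k, q x ∈ Γ

def IsIC {k : ℕ} (q : E k → E k) (s : E k → ℝ) : Prop :=
  ∀ x ∈ orthant k, ∀ y ∈ orthant k, dotp (q x) x - s x ≥ dotp (q y) x - s y

def IsIR {k : ℕ} (q : E k → E k) (s : E k → ℝ) : Prop :=
  ∀ x ∈ orthant k, 0 ≤ dotp (q x) x - s x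

def IsNPT {k : ℕ} (s : E k → ℝ) : Prop :=
  ∀ x ∈ orthant k, 0 ≤ s x

/-- The set of subgradients of `f` at `x`. -/
def Subgrad {k : ℕ} (f : E k → ℝ) (x : E k) : Set (E k) :=
  {g | ∀ y, f y - f x ≥ dotp g (y - x)}

/-- `b ∈ B_Γ`: convex on `ℝ^k`, `b 0 = 0`, and a subgradient in `Γ` at every point. -/
def BClass {k : ℕ} (Γ : Set (E k)) (b : E k → ℝ) : Prop :=
  ConvexOn ℝ Set.univ b ∧ b 0 = 0 ∧ ∀ x, (Subgrad b x ∩ Γ).Nonempty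

/-- One-sided directional derivative `f′(x;y) = lim_{δ→0⁺} (f(x+δy)-f(x))/δ`. -/
def dirDeriv {k : ℕ} (b : E k → ℝ) (x y : E k) : ℝ :=
  limUnder (nhdsWithin (0:ℝ) (Set.Ioi 0)) fun δ => (b (x + δ • y) - b x) / δ

/-- The extended buyer payoff function `b(x) = sup_{z ∈ ℝ₊^k} [q(z)·x − s(z)]`. -/
def extPayoff {k : ℕ} (q : E k → E k) (s : E k → ℝ) (x : E k) : ℝ :=
  sSup ((fun z => dotp (q z) x - s z) '' orthant k)

def SellerFavorable {k : ℕ} (q : E k → E k) (s : E k → ℝ) : Prop :=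
  ∀ x ∈ orthant k, s x = dirDeriv (extPayoff q s) x x - extPayoff q s x

/-- Coordinatewise maximum of two vectors in `ℝ^k`. -/
def cmax {k : ℕ} (x y : E k) : E k := WithLp.toLp 2 (fun i => max (x i) (y i))

/-- Coordinatewise minimum of two vectors in `ℝ^k`. -/
def cmin {k : ℕ} (x y : E k) : E k := WithLp.toLp 2 (fun i => min (x i) (y i))

/-- A supermodular function on `ℝ^k`. -/
def Supermodular {k : ℕ} (b : E k → ℝ) : Prop :=
  ∀ x y : E k, b (cmax x y) + b (cmin x y) ≥ b x + b y

/-! Supermodularity makes subgradients increasing: if `u ≤ v` coordinatewise with `u i < v i`,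
then `g i ≤ h i` for all `g ∈ ∂b(u)` and `h ∈ ∂b(v)`; compare `b` at `u`, `v` and at the two points
obtained from them by exchanging their `i`-th coordinates.

Take `q*(x)` to be a limit of subgradients in `Γ` at `x + ε𝟙` as `ε ↓ 0` (compactness of `Γ`). It
lies in `∂b(x)` because `b` is continuous, so the graph of `∂b` is closed; it dominates `∂b(x)`
because the approximating points lie strictly above `x`; and it is monotone because every point
strictly above `x` eventually lies strictly above the approximating points of `x`. -/

open Topology

lemma Filter.Tendsto.piLp_apply {p : ENNReal} {ι α : Type*} {β : ι → Type*}
    [∀ i, TopologicalSpace (β i)] {l : Filter α} {f : α → PiLp p β} {x : PiLp p β}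
    (h : Tendsto f l (𝓝 x)) (i : ι) : Tendsto (fun a => f a i) l (𝓝 (x i)) :=
  ((PiLp.continuous_apply p β i).tendsto x).comp h

section

variable {k : ℕ}

lemma dotp_single (g : E k) (i : Fin k) (t : ℝ) :
    dotp g (EuclideanSpace.single i t) = g i * t := by
  simp [dotp]

lemma continuous_dotp : Continuous fun p : E k × E k => dotp p.1 p.2 := by
  unfold dotp
  fun_prop

lemma isOpen_setOf_forall_apply_lt (w : E k) : IsOpen {z : E k | ∀ j, z j < w j} := by
  simp only [Set.ofPred_forall]
  exact isOpen_iInter_of_finite fun j => isOpen_lt (by fun_prop) continuous_const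

lemma isClosed_setOf_mem_subgrad {b : E k → ℝ} (hb : Continuous b) :
    IsClosed {p : E k × E k | p.2 ∈ Subgrad b p.1} := by
  have h : {p : E k × E k | p.2 ∈ Subgrad b p.1} =
      ⋂ y, {p | dotp p.2 (y - p.1) ≤ b y - b p.1} := by
    ext p; simp [Subgrad]
  rw [h]
  exact isClosed_iInter fun y => isClosed_le
    (continuous_dotp.comp (continuous_snd.prodMk (continuous_const.sub continuous_fst)))
    (continuous_const.sub (hb.comp continuous_fst))

namespace Supermodular

variable {b : E k → ℝ}

lemma subgrad_apply_le (hsm : Supermodular b) {u v : E k} (huv : ∀ j, u j ≤ v j) {i : Fin k}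
    (hi : u i < v i) {g h : E k} (hg : g ∈ Subgrad b u) (hh : h ∈ Subgrad b v) : g i ≤ h i := by
  set a := u + EuclideanSpace.single i (v i - u i)
  set c := v + EuclideanSpace.single i (u i - v i)
  have hmax : cmax a c = v := by
    ext j
    by_cases hj : j = i
    · subst hj; simp [a, c, cmax, hi.le]
    · simp [a, c, cmax, hj, huv j]
  have hmin : cmin a c = u := by
    ext j
    by_cases hj : j = i
    · subst hj; simp [a, c, cmin, hi.le]
    · simp [a, c, cmin, hj, huv j]
  have hsup := hsm a c
  rw [hmax, hmin] at hsup
  have hga : b a - b u ≥ g i * (v i - u i) := by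
    simpa [a, dotp_single] using hg a
  have hhc : b c - b v ≥ h i * (u i - v i) := by
    simpa [c, dotp_single] using hh c
  have hprod : (g i - h i) * (v i - u i) ≤ 0 := by linarith
  exact sub_nonpos.mp (nonpos_of_mul_nonpos_left hprod (sub_pos.mpr hi))

variable {ι : Type*} {l : Filter ι} [l.NeBot] {x q : E k} {z g : ι → E k}

lemma subgrad_apply_le_of_tendsto (hsm : Supermodular b) (hxz : ∀ n j, x j < z n j)
    (hgz : ∀ n, g n ∈ Subgrad b (z n)) (hgq : Tendsto g l (𝓝 q)) {h : E k}
    (hh : h ∈ Subgrad b x) (i : Fin k) : h i ≤ q i :=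
  ge_of_tendsto (hgq.piLp_apply i) <| Eventually.of_forall fun n =>
    hsm.subgrad_apply_le (fun j => (hxz n j).le) (hxz n i) hh (hgz n)

lemma apply_le_subgrad_of_tendsto (hsm : Supermodular b) (hz : Tendsto z l (𝓝 x))
    (hgz : ∀ n, g n ∈ Subgrad b (z n)) (hgq : Tendsto g l (𝓝 q)) {w h : E k}
    (hxw : ∀ j, x j < w j) (hh : h ∈ Subgrad b w) (i : Fin k) : q i ≤ h i := by
  have hzw : ∀ᶠ n in l, ∀ j, z n j < w j :=
    hz.eventually ((isOpen_setOf_forall_apply_lt w).mem_nhds hxw)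
  exact le_of_tendsto (hgq.piLp_apply i) <| hzw.mono fun n hn =>
    hsm.subgrad_apply_le (fun j => (hn j).le) (hn i) (hgz n) hh

end Supermodular

lemma exists_tendsto_subgrad_from_above {Γ : Set (E k)} (hΓ : IsCompact Γ) {b : E k → ℝ}
    (hsub : ∀ x, (Subgrad b x ∩ Γ).Nonempty) (x : E k) :
    ∃ q ∈ Γ, ∃ z g : ℕ → E k, Tendsto z atTop (𝓝 x) ∧ (∀ n j, x j < z n j) ∧
      (∀ n, g n ∈ Subgrad b (z n)) ∧ Tendsto g atTop (𝓝 q) := by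
  choose G hG using hsub
  let one : E k := WithLp.toLp 2 fun _ => 1
  let z : ℕ → E k := fun n => x + (1 / (n + 1 : ℝ)) • one
  have hz : Tendsto z atTop (𝓝 x) := by
    simpa [z] using
      ((tendsto_one_div_add_atTop_nhds_zero_nat (𝕜 := ℝ)).smul_const one).const_add x
  obtain ⟨q, hq, φ, hφ, hGq⟩ := hΓ.tendsto_subseq fun n => (hG (z n)).2
  refine ⟨q, hq, z ∘ φ, G ∘ z ∘ φ, hz.comp hφ.tendsto_atTop, fun n j => ?_,
    fun n => (hG _).1, hGq⟩
  simp only [Function.comp_apply, z, one, PiLp.add_apply, PiLp.smul_apply, smul_eq_mul, mul_one]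
  exact lt_add_of_pos_right _ (by positivity)

end

theorem stmt11_general {k : ℕ} (Γ : Set (E k))
    (hΓc : IsCompact Γ)
    (b : E k → ℝ) (hb : BClass Γ b) (hsm : Supermodular b) :
    ∃ qs : E k → E k,
      (∀ x ∈ orthant k,
        qs x ∈ Subgrad b x ∧ qs x ∈ Γ ∧
        ∀ g ∈ Subgrad b x, ∀ i, g i ≤ qs x i) ∧
      (∀ x ∈ orthant k, ∀ y ∈ orthant k, (∀ i, x i ≤ y i) →
        ∀ i, qs x i ≤ qs y i) := by
  obtain ⟨hconv, -, hsub⟩ := hb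
  have hcont : Continuous b := continuousOn_univ.mp (hconv.continuousOn isOpen_univ)
  choose q hqΓ z g hz hxz hgz hgq using exists_tendsto_subgrad_from_above hΓc hsub
  refine ⟨q, fun x _ => ⟨?_, hqΓ x, fun h hh => hsm.subgrad_apply_le_of_tendsto
    (hxz x) (hgz x) (hgq x) hh⟩, fun x _ y _ hxy i => ?_⟩
  · exact (isClosed_setOf_mem_subgrad hcont).mem_of_tendsto ((hz x).prodMk_nhds (hgq x))
      (Eventually.of_forall (hgz x))
  · exact ge_of_tendsto ((hgq y).piLp_apply i) <| Eventually.of_forall fun n =>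
      hsm.apply_le_subgrad_of_tendsto (hz x) (hgz x) (hgq x)
        (fun j => (hxy j).trans_lt (hxz y n j)) (hgz y n) i

/-- for supermodular `b ∈ B_Γ`, at every `x ∈ ℝ₊^k` the
subdifferential `∂b(x)` has a coordinatewise-greatest element `q*(x)`, which lies
in `Γ`, and `x ↦ q*(x)` is monotone. -/
theorem stmt11 {k : ℕ} (hk : 1 ≤ k) (Γ : Set (E k)) (hΓne : Γ.Nonempty)
    (hΓc : IsCompact Γ) (hΓ : Γ ⊆ orthant k)
    (b : E k → ℝ) (hb : BClass Γ b) (hsm : Supermodular b) :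
    ∃ qs : E k → E k,
      (∀ x ∈ orthant k,
        qs x ∈ Subgrad b x ∧ qs x ∈ Γ ∧
        ∀ g ∈ Subgrad b x, ∀ i, g i ≤ qs x i) ∧
      (∀ x ∈ orthant k, ∀ y ∈ orthant k, (∀ i, x i ≤ y i) →
        ∀ i, qs x i ≤ qs y i) :=
  stmt11_general Γ hΓc b hb hsm
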